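/- arXiv:2603.02400 — 2 statements merged into one kernel-verified Lean document; each statement's English description precedes it below -/
import Mathlib

section
/- Let R be a set of requests on a bidirected tree T rooted at a vertex z, and let R^∨ be the set of unimodal requests of R. Then the interference graph I(R^∨,T) is a cobipartite graph. -/
open SimpleGraph

/-- A request in a bidirected tree `T`: a directed path of length at least 1,
encoded as a path (walk without vertex repetition) in the underlying tree. -/
structure Request {V : Type*} (T : SimpleGraph V) where
  s : V
  t : V
  toWalk : T.Walk s t
  isPath : toWalk.IsPath
  one_le_length : 1 ≤ toWalk.length

namespace Request

variable {V : Type*} {T : SimpleGraph V}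

/-- The second vertex `s_r⁺` of a request. -/
def sPlus (r : Request T) : V := r.toWalk.getVert 1

/-- The penultimate vertex `t_r⁻` of a request. -/
def tMinus (r : Request T) : V := r.toWalk.getVert (r.toWalk.length - 1)

end Request

variable {V : Type*}

/-- `r` interferes on `r'` if the unique path from `s_r` to `t_{r'}` in the tree `T`
has first arc the emission arc of `r` and last arc the reception arc of `r'`. -/
def InterferesOn (T : SimpleGraph V) (r r' : Request T) : Prop :=
  ∃ p : T.Walk r.s r'.t, p.IsPath ∧ 1 ≤ p.length ∧
    p.getVert 1 = r.sPlus ∧ p.getVert (p.length - 1) = r'.tMinus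

/-- Two requests interfere if one of them interferes on the other. -/
def Interfere (T : SimpleGraph V) (r r' : Request T) : Prop :=
  InterferesOn T r r' ∨ InterferesOn T r' r

/-- `x` is an ancestor of `y` in the tree `T` rooted at `z`:
`x` lies on the unique path from `z` to `y`. -/
def Ancestor (T : SimpleGraph V) (z x y : V) : Prop :=
  ∃ p : T.Walk z y, p.IsPath ∧ x ∈ p.support

/-- Two vertices are related if one is an ancestor of the other. -/
def Related (T : SimpleGraph V) (z x y : V) : Prop :=
  Ancestor T z x y ∨ Ancestor T z y x

/-- A request is converging (w.r.t. root `z`) if all its arcs are directed towards `z`,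
i.e. the head of every arc is an ancestor of its tail. -/
def Converging (T : SimpleGraph V) (z : V) (r : Request T) : Prop :=
  ∀ i < r.toWalk.length, Ancestor T z (r.toWalk.getVert (i+1)) (r.toWalk.getVert i)

/-- A request is diverging (w.r.t. root `z`) if all its arcs are directed away from `z`,
i.e. the tail of every arc is an ancestor of its head. -/
def Diverging (T : SimpleGraph V) (z : V) (r : Request T) : Prop :=
  ∀ i < r.toWalk.length, Ancestor T z (r.toWalk.getVert i) (r.toWalk.getVert (i+1))

/-- A request is unimodal (w.r.t. root `z`) if it is neither converging nor diverging. -/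
def Unimodal (T : SimpleGraph V) (z : V) (r : Request T) : Prop :=
  ¬ Converging T z r ∧ ¬ Diverging T z r

/-- `m` is the middle of the request `r` (w.r.t. root `z`): the vertex of `r`
closest to the root, i.e. the vertex of `r` which is an ancestor of every vertex of `r`. -/
def IsMiddle (T : SimpleGraph V) (z : V) (r : Request T) (m : V) : Prop :=
  m ∈ r.toWalk.support ∧ ∀ y ∈ r.toWalk.support, Ancestor T z m y

/-- The interference graph of a family of requests: two (indices of) requests are
adjacent iff they are distinct and the requests interfere. -/
def interferenceGraph (T : SimpleGraph V) {ι : Type*} (f : ι → Request T) :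
    SimpleGraph ι where
  Adj i j := i ≠ j ∧ Interfere T (f i) (f j)
  symm := by
    constructor
    intro i j h
    exact ⟨h.1.symm, h.2.symm⟩
  loopless := by
    constructor
    intro i h
    exact h.1 rfl

/-- The interference graph of a set of requests. -/
def interGraph (T : SimpleGraph V) (R : Set (Request T)) : SimpleGraph ↥R :=
  interferenceGraph T (fun r => (r : Request T))

/-- The pair `(a, b)` is an arc joining two consecutive vertices of the
bidirected path corresponding to the walk `p` (in either direction). -/
def ArcOn (T : SimpleGraph V) {u v : V} (p : T.Walk u v) (a b : V) : Prop :=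
  ∃ j < p.length, (p.getVert j = a ∧ p.getVert (j+1) = b) ∨
    (p.getVert j = b ∧ p.getVert (j+1) = a)

/-- The request `r` shares an arc with the bidirected path corresponding to
the walk `p`. -/
def SharesArc (T : SimpleGraph V) {u v : V} (p : T.Walk u v) (r : Request T) : Prop :=
  ∃ i < r.toWalk.length, ArcOn T p (r.toWalk.getVert i) (r.toWalk.getVert (i+1))

/-- A leaf of a tree: a vertex with at most one neighbour. -/
def IsLeaf (T : SimpleGraph V) (y : V) : Prop :=
  {w | T.Adj y w}.Subsingleton

/-- A comparability graph: there is a partial order on the vertices such that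
two distinct vertices are adjacent iff they are comparable. -/
def IsComparabilityGraph {α : Type*} (G : SimpleGraph α) : Prop :=
  ∃ le : α → α → Prop, IsPartialOrder α le ∧ ∀ a b, G.Adj a b ↔ a ≠ b ∧ (le a b ∨ le b a)

/-- A cobipartite graph: the vertex set can be partitioned into two cliques. -/
def IsCobipartite {α : Type*} (G : SimpleGraph α) : Prop :=
  ∃ A : Set α, G.IsClique A ∧ G.IsClique Aᶜ

/-!
A unimodal request `r` climbs from `s_r` to a highest vertex `m_r` and descends again, entering
`m_r` from a child `c⁺_r` and leaving it towards a different child `c⁻_r`. So `s_r` and `t_r` are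
unrelated, the emission arc of `r` leads to the parent of `s_r` and the reception arc comes from
the parent of `t_r`. If `s_r` and `t_{r'}` are unrelated, the tree path between them likewise
starts with the arc to the parent of `s_r` and ends with the arc from the parent of `t_{r'}`, so
`r` interferes on `r'`. Hence for two non-interfering unimodal requests, `s_r, t_{r'}` and
`s_{r'}, t_r` are related pairs, which forces `m_r = m_{r'}`, `c⁺_r = c⁻_{r'}` and
`c⁺_{r'} = c⁻_r`. For any linear order on the vertices, the requests with `c⁺_r < c⁻_r` and those
with `c⁺_r > c⁻_r` are then two cliques.
-/

section RootedTree

variable {T : SimpleGraph V} {z : V}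

def IsChild (T : SimpleGraph V) (z m c : V) : Prop :=
  T.Adj m c ∧ Ancestor T z m c

/-- `m` is the lowest common ancestor of `u` and `v`, reached from them through its distinct
children `cu` and `cv`. -/
structure IsFork (T : SimpleGraph V) (z u v m cu cv : V) : Prop where
  isChild_left : IsChild T z m cu
  isChild_right : IsChild T z m cv
  left_ne_right : cu ≠ cv
  ancestor_left : Ancestor T z cu u
  ancestor_right : Ancestor T z cv v

theorem ancestor_getVert_of_le {y : V} {p : T.Walk z y} (hp : p.IsPath) {i j : ℕ}
    (hij : i ≤ j) : Ancestor T z (p.getVert i) (p.getVert j) :=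
  ⟨p.take j, hp.take j, by simpa [hij] using (p.take j).getVert_mem_support i⟩

theorem exists_isChild_of_ancestor {m y : V} (hmy : Ancestor T z m y) (hne : m ≠ y) :
    ∃ c, IsChild T z m c ∧ Ancestor T z c y := by
  obtain ⟨p, hp, hm⟩ := hmy
  obtain ⟨i, rfl, hi⟩ := Walk.mem_support_iff_exists_getVert.1 hm
  have hil : i < p.length := by
    refine lt_of_le_of_ne hi fun h => hne ?_
    rw [h, Walk.getVert_length]
  refine ⟨p.getVert (i + 1), ⟨p.adj_getVert_succ hil, ancestor_getVert_of_le hp i.le_succ⟩, ?_⟩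
  simpa using ancestor_getVert_of_le hp hil

theorem SimpleGraph.Preconnected.ancestor_refl (hT : T.Preconnected) (y : V) :
    Ancestor T z y y := by
  classical
  obtain ⟨p⟩ := hT z y
  exact ⟨p.bypass, p.bypass_isPath, p.bypass.end_mem_support⟩

namespace SimpleGraph.IsAcyclic

variable (hT : T.IsAcyclic)
include hT

theorem ancestor_iff_mem_support {x y : V} {p : T.Walk z y} (hp : p.IsPath) :
    Ancestor T z x y ↔ x ∈ p.support := by
  refine ⟨fun ⟨q, hq, hx⟩ => ?_, fun hx => ⟨p, hp, hx⟩⟩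
  obtain rfl : q = p := congrArg Subtype.val ((hT.subsingleton_path z y).elim ⟨q, hq⟩ ⟨p, hp⟩)
  exact hx

theorem ancestor_trans {x y w : V} (hxy : Ancestor T z x y) (hyw : Ancestor T z y w) :
    Ancestor T z x w := by
  classical
  obtain ⟨p, hp, hy⟩ := hyw
  have hx := (hT.ancestor_iff_mem_support (hp.takeUntil hy)).1 hxy
  exact ⟨p, hp, p.support_takeUntil_subset_support hy hx⟩

theorem ancestor_antisymm {x y : V} (hxy : Ancestor T z x y) (hyx : Ancestor T z y x) :
    x = y := by
  classical
  obtain ⟨p, hp, hx⟩ := hxy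
  by_contra hne
  exact Walk.endpoint_notMem_support_takeUntil hp hx (Ne.symm hne)
    ((hT.ancestor_iff_mem_support (hp.takeUntil hx)).1 hyx)

theorem related_of_ancestor {a b y : V} (ha : Ancestor T z a y) (hb : Ancestor T z b y) :
    Related T z a b := by
  obtain ⟨p, hp, hay⟩ := ha
  obtain ⟨i, rfl, -⟩ := Walk.mem_support_iff_exists_getVert.1 hay
  obtain ⟨j, rfl, -⟩ :=
    Walk.mem_support_iff_exists_getVert.1 ((hT.ancestor_iff_mem_support hp).1 hb)
  rcases le_total i j with hij | hji
  · exact Or.inl (ancestor_getVert_of_le hp hij)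
  · exact Or.inr (ancestor_getVert_of_le hp hji)

theorem related_of_ancestor_of_related {a b x y : V} (ha : Ancestor T z a x)
    (hb : Ancestor T z b y) (hxy : Related T z x y) : Related T z a b := by
  rcases hxy with hxy | hyx
  · exact hT.related_of_ancestor (hT.ancestor_trans ha hxy) hb
  · exact hT.related_of_ancestor ha (hT.ancestor_trans hb hyx)

theorem eq_of_isChild {p p' x : V} (hp : IsChild T z p x) (hp' : IsChild T z p' x) :
    p = p' := by
  obtain ⟨w, hw, hpw⟩ := hp.2
  have hp'w := (hT.ancestor_iff_mem_support hw).1 hp'.2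
  rw [hT.eq_penultimate_of_adj_end hw hp.1.symm hpw,
    hT.eq_penultimate_of_adj_end hw hp'.1.symm hp'w]

theorem eq_or_eq_of_isChild {m c x : V} (hc : IsChild T z m c) (hmx : Ancestor T z m x)
    (hxc : Ancestor T z x c) : x = m ∨ x = c := by
  obtain ⟨p, hp, hx⟩ := hxc
  obtain ⟨i, rfl, hi⟩ := Walk.mem_support_iff_exists_getVert.1 hx
  rcases hi.lt_or_eq with hi | rfl
  · left
    refine hT.ancestor_antisymm ?_ hmx
    rw [hT.eq_penultimate_of_adj_end hp hc.1.symm ((hT.ancestor_iff_mem_support hp).1 hc.2)]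
    exact ancestor_getVert_of_le hp (by omega)
  · exact Or.inr p.getVert_length

theorem isChild_eq_of_ancestor {m c c' x : V} (hc : IsChild T z m c) (hc' : IsChild T z m c')
    (hcx : Ancestor T z c x) (hc'x : Ancestor T z c' x) : c = c' := by
  rcases hT.related_of_ancestor hcx hc'x with h | h
  · exact (hT.eq_or_eq_of_isChild hc' hc.2 h).resolve_left hc.1.ne'
  · exact ((hT.eq_or_eq_of_isChild hc hc'.2 h).resolve_left hc'.1.ne').symm

theorem isChild_eq_of_related {m c c' x y : V} (hc : IsChild T z m c) (hc' : IsChild T z m c')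
    (hcx : Ancestor T z c x) (hc'y : Ancestor T z c' y) (hxy : Related T z x y) : c = c' := by
  rcases hxy with hxy | hyx
  · exact hT.isChild_eq_of_ancestor hc hc' (hT.ancestor_trans hcx hxy) hc'y
  · exact hT.isChild_eq_of_ancestor hc hc' hcx (hT.ancestor_trans hc'y hyx)

end SimpleGraph.IsAcyclic

namespace SimpleGraph.IsTree

variable (hT : T.IsTree)
include hT

theorem isChild_or_isChild_of_adj {u v : V} (h : T.Adj u v) :
    IsChild T z u v ∨ IsChild T z v u := by
  classical
  obtain ⟨p, hp⟩ := (hT.existsUnique_path z u).exists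
  by_cases hv : v ∈ p.support
  · exact Or.inr ⟨h.symm, p, hp, hv⟩
  · exact Or.inl ⟨h, p.concat h, hp.concat hv h,
      p.support_subset_support_concat h p.end_mem_support⟩

theorem ancestor_of_forall_up {f : ℕ → V} {j : ℕ}
    (h : ∀ l < j, Ancestor T z (f (l + 1)) (f l)) : Ancestor T z (f j) (f 0) := by
  induction j with
  | zero => exact hT.connected.preconnected.ancestor_refl _
  | succ j ih =>
    exact hT.isAcyclic.ancestor_trans (h j j.lt_succ_self) (ih fun l hl => h l (by omega))

theorem ancestor_of_forall_down {f : ℕ → V} {i j : ℕ} (hij : i ≤ j)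
    (h : ∀ l ≥ i, Ancestor T z (f l) (f (l + 1))) : Ancestor T z (f i) (f j) := by
  induction j, hij using Nat.le_induction with
  | base => exact hT.connected.preconnected.ancestor_refl _
  | succ j hij ih => exact hT.isAcyclic.ancestor_trans ih (h j hij)

/-- Once a path steps away from the root it never steps back: otherwise both neighbours of
`w.getVert (i + 1)` on the path would be its parent. -/
theorem ancestor_succ_succ {u v : V} {w : T.Walk u v} (hw : w.IsPath) {i : ℕ}
    (hi : i + 1 < w.length) (hdown : Ancestor T z (w.getVert i) (w.getVert (i + 1))) :
    Ancestor T z (w.getVert (i + 1)) (w.getVert (i + 2)) := by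
  refine ((hT.isChild_or_isChild_of_adj (w.adj_getVert_succ hi)).resolve_right
    fun hup => ?_).2
  have := hw.getVert_injOn (by simp; omega) (by simp; omega)
    (hT.isAcyclic.eq_of_isChild ⟨w.adj_getVert_succ (by omega), hdown⟩ hup)
  omega

theorem exists_turn {u v : V} {w : T.Walk u v} (hw : w.IsPath) :
    ∃ k, (∀ i < k, Ancestor T z (w.getVert (i + 1)) (w.getVert i)) ∧
      ∀ i ≥ k, Ancestor T z (w.getVert i) (w.getVert (i + 1)) := by
  classical
  have hend : Ancestor T z (w.getVert w.length) (w.getVert (w.length + 1)) := by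
    simpa [w.getVert_of_length_le] using hT.connected.preconnected.ancestor_refl (z := z) v
  have hex : ∃ k, Ancestor T z (w.getVert k) (w.getVert (k + 1)) := ⟨_, hend⟩
  refine ⟨Nat.find hex, fun i hi => ?_, fun i hi => ?_⟩
  · have hil : i < w.length := hi.trans_le (Nat.find_min' hex hend)
    exact ((hT.isChild_or_isChild_of_adj (w.adj_getVert_succ hil)).resolve_left
      fun h => Nat.find_min hex hi h.2).2
  · induction i, hi using Nat.le_induction with
    | base => exact Nat.find_spec hex
    | succ i _ ih =>
      by_cases hil : i + 1 < w.length
      · exact hT.ancestor_succ_succ hw hil ih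
      · rw [w.getVert_of_length_le (by omega), w.getVert_of_length_le (by omega)]
        exact hT.connected.preconnected.ancestor_refl v

theorem isChild_snd_of_not_ancestor {u v : V} {w : T.Walk u v} (hw : w.IsPath)
    (h : ¬ Ancestor T z u v) : IsChild T z w.snd u := by
  obtain ⟨k, hup, hdown⟩ := hT.exists_turn (z := z) hw
  have hk : 0 < k := by
    by_contra! hk
    apply h
    simpa using hT.ancestor_of_forall_down (f := w.getVert) w.length.zero_le
      fun l _ => hdown l (by omega)
  have hnil : ¬ w.Nil := fun hnil => h (by rw [hnil.eq]; exact hT.connected.preconnected.ancestor_refl v)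
  exact ⟨(w.adj_snd hnil).symm, by simpa using hup 0 hk⟩

theorem isChild_penultimate_of_not_ancestor {u v : V} {w : T.Walk u v} (hw : w.IsPath)
    (h : ¬ Ancestor T z v u) : IsChild T z w.penultimate v := by
  simpa using hT.isChild_snd_of_not_ancestor hw.reverse h

end SimpleGraph.IsTree

namespace IsFork

variable {u v m cu cv u' v' m' cu' cv' : V}

theorem not_related (hT : T.IsAcyclic) (h : IsFork T z u v m cu cv) : ¬ Related T z u v :=
  fun huv => h.left_ne_right <| hT.isChild_eq_of_related h.isChild_left h.isChild_right
    h.ancestor_left h.ancestor_right huv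

theorem eq_of_ancestor (hT : T.IsAcyclic) (h : IsFork T z u v m cu cv)
    (h' : IsFork T z u' v' m' cu' cv') (huv' : Related T z u v') (hu'v : Related T z u' v)
    (hmm' : Ancestor T z m m') : m = m' := by
  by_contra hne
  obtain ⟨c, hc, hcm'⟩ := exists_isChild_of_ancestor hmm' hne
  have hcu' : Ancestor T z c u' :=
    hT.ancestor_trans hcm' (hT.ancestor_trans h'.isChild_left.2 h'.ancestor_left)
  have hcv' : Ancestor T z c v' :=
    hT.ancestor_trans hcm' (hT.ancestor_trans h'.isChild_right.2 h'.ancestor_right)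
  have hcu := hT.isChild_eq_of_related h.isChild_left hc h.ancestor_left hcv' huv'
  have hcv := hT.isChild_eq_of_related h.isChild_right hc h.ancestor_right hcu' hu'v.symm
  exact h.left_ne_right (hcu.trans hcv.symm)

theorem left_eq_right_of_related (hT : T.IsAcyclic) (h : IsFork T z u v m cu cv)
    (h' : IsFork T z u' v' m' cu' cv') (huv' : Related T z u v') (hu'v : Related T z u' v) :
    cu = cv' := by
  obtain rfl : m = m' := by
    rcases hT.related_of_ancestor_of_related
      (hT.ancestor_trans h.isChild_left.2 h.ancestor_left)
      (hT.ancestor_trans h'.isChild_right.2 h'.ancestor_right) huv' with hmm' | hm'm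
    · exact h.eq_of_ancestor hT h' huv' hu'v hmm'
    · exact (h'.eq_of_ancestor hT h hu'v huv' hm'm).symm
  exact hT.isChild_eq_of_related h.isChild_left h'.isChild_right h.ancestor_left
    h'.ancestor_right huv'

end IsFork

theorem Unimodal.exists_isFork (hT : T.IsTree) {r : Request T} (hr : Unimodal T z r) :
    ∃ m cu cv, IsFork T z r.s r.t m cu cv := by
  set w := r.toWalk
  have hw : w.IsPath := r.isPath
  obtain ⟨k, hup, hdown⟩ := hT.exists_turn (z := z) hw
  obtain ⟨i, hi, hnot_up⟩ : ∃ i < w.length, ¬ Ancestor T z (w.getVert (i + 1)) (w.getVert i) := by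
    simpa [Converging] using hr.1
  obtain ⟨j, -, hnot_down⟩ : ∃ j < w.length, ¬ Ancestor T z (w.getVert j) (w.getVert (j + 1)) := by
    simpa [Diverging] using hr.2
  have hki : k ≤ i := not_lt.1 fun h => hnot_up (hup i h)
  have hjk : j < k := not_le.1 fun h => hnot_down (hdown j h)
  obtain ⟨k, rfl⟩ : ∃ k', k = k' + 1 := Nat.exists_eq_add_one.2 (by omega)
  refine ⟨w.getVert (k + 1), w.getVert k, w.getVert (k + 2),
    ⟨(w.adj_getVert_succ (by omega)).symm, hup k k.lt_succ_self⟩,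
    ⟨w.adj_getVert_succ (by omega), hdown (k + 1) le_rfl⟩, fun heq => ?_, ?_, ?_⟩
  · have := hw.getVert_injOn (by simp; omega) (by simp; omega) heq
    omega
  · simpa using hT.ancestor_of_forall_up (f := w.getVert) fun l hl => hup l (by omega)
  · simpa using hT.ancestor_of_forall_down (f := w.getVert) (j := w.length) (by omega)
      fun l hl => hdown l (by omega)

theorem interferesOn_of_not_related (hT : T.IsTree) {r r' : Request T}
    (hr : ¬ Related T z r.s r.t) (hr' : ¬ Related T z r'.s r'.t)
    (h : ¬ Related T z r.s r'.t) : InterferesOn T r r' := by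
  obtain ⟨p, hp⟩ := (hT.existsUnique_path r.s r'.t).exists
  have hlen : 1 ≤ p.length := by
    by_contra! h0
    rw [p.eq_of_length_eq_zero (by omega)] at h
    exact h (Or.inl (hT.connected.preconnected.ancestor_refl _))
  exact ⟨p, hp, hlen,
    hT.isAcyclic.eq_of_isChild (hT.isChild_snd_of_not_ancestor hp (h ∘ Or.inl))
      (hT.isChild_snd_of_not_ancestor r.isPath (hr ∘ Or.inl)),
    hT.isAcyclic.eq_of_isChild (hT.isChild_penultimate_of_not_ancestor hp (h ∘ Or.inr))
      (hT.isChild_penultimate_of_not_ancestor r'.isPath (hr' ∘ Or.inr))⟩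

end RootedTree

theorem isCobipartite_of_not_adj {α β : Type*} (G : SimpleGraph α) (f g : α → β)
    (hfg : ∀ a, f a ≠ g a) (h : ∀ a b, a ≠ b → ¬ G.Adj a b → f a = g b) : IsCobipartite G := by
  classical
  let _ : LinearOrder β := IsWellOrder.linearOrder WellOrderingRel
  have swap : ∀ a b, a ≠ b → ¬ G.Adj a b → f a = g b ∧ f b = g a := fun a b hab hadj =>
    ⟨h a b hab hadj, h b a hab.symm fun hba => hadj hba.symm⟩
  refine ⟨{a | f a < g a}, fun a ha b hb hab => ?_, fun a ha b hb hab => ?_⟩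
  all_goals
    by_contra hadj
    obtain ⟨hab', hba'⟩ := swap a b hab hadj
    have := hfg a
    have := hfg b
    simp only [Set.mem_compl_iff, Set.mem_ofPred_eq] at ha hb
    order

/-- Corollary 4(iii): the interference graph of the unimodal requests of `R`
is a cobipartite graph. -/
theorem unimodal_cobipartite {V : Type*} (T : SimpleGraph V) (hT : T.IsTree)
    (z : V) (R : Set (Request T)) :
    IsCobipartite (interGraph T {r ∈ R | Unimodal T z r}) := by
  choose m cs ct hfork using fun r : {r ∈ R | Unimodal T z r} => r.2.2.exists_isFork hT
  have hrel : ∀ r r' : {r ∈ R | Unimodal T z r}, ¬ Interfere T r r' → Related T z r.1.s r'.1.t :=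
    fun r r' hI => not_not.1 fun h => hI <| Or.inl <| interferesOn_of_not_related hT
      ((hfork r).not_related hT.isAcyclic) ((hfork r').not_related hT.isAcyclic) h
  refine isCobipartite_of_not_adj _ cs ct (fun r => (hfork r).left_ne_right)
    fun r r' hne hadj => ?_
  have hI : ¬ Interfere T r r' := fun hI => hadj ⟨hne, hI⟩
  exact (hfork r).left_eq_right_of_related hT.isAcyclic (hfork r') (hrel r r' hI)
    (hrel r' r (hI ∘ Or.symm))
end

section
/- Let T be a bidirected tree rooted at a vertex z, and let r^- be a converging request, r^+ a diverging request, and r^∨ a unimodal request in T. Then at least two of the three requests r^-, r^+, r^∨ interfere with each other. -/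
open SimpleGraph

variable {V : Type*}

/-!
Orient `T` from the root `z`: `Ancestor T z` is a partial order in which the ancestors of any
vertex form a chain and adjacent vertices are comparable. A path from `u` to `v` leaves `u` towards
its parent exactly when `v` is not below `u`, and towards a child `c` when `v` is below `c`. A
converging request emits upwards and receives from below, a diverging one emits downwards and
receives from above, and a unimodal one emits upwards, receives from above and joins two unrelated
vertices. So if no two of the requests interfere, then: `s(r⁻)` is related to `t(r⁺)` and to
`t(r^∨)`, `s(r^∨)` is related to `t(r⁺)`, `t(r⁻)⁻` is not above `s(r^∨)`, and `s(r⁺)⁺` is not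
above `t(r^∨)`. These force `t(r⁺)` and `t(r^∨)` to be unrelated, so `s(r⁻)` is a common ancestor
of both. The vertex `t(r⁻)⁻` lies above `s(r⁻)`, hence is related to `s(r^∨)`; being above it is
excluded, and being below it makes `s(r^∨)` an ancestor of `t(r^∨)`.
-/

open Walk

theorem SimpleGraph.IsTree.eq_of_isPath {T : SimpleGraph V} (hT : T.IsTree) {u v : V}
    {p q : T.Walk u v} (hp : p.IsPath) (hq : q.IsPath) : p = q :=
  congrArg Subtype.val ((hT.isAcyclic.subsingleton_path u v).elim ⟨p, hp⟩ ⟨q, hq⟩)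

section RootedTree

variable {T : SimpleGraph V} {z u v w x y : V}

theorem Ancestor.mem_support (hT : T.IsTree) (h : Ancestor T z x y) {p : T.Walk z y}
    (hp : p.IsPath) : x ∈ p.support := by
  obtain ⟨q, hq, hx⟩ := h
  rwa [hT.eq_of_isPath hq hp] at hx

theorem Ancestor.refl (hT : T.IsTree) (x : V) : Ancestor T z x x :=
  let ⟨p, hp, _⟩ := hT.existsUnique_path z x
  ⟨p, hp, p.end_mem_support⟩

theorem Ancestor.exists_append (h : Ancestor T z x y) :
    ∃ (p : T.Walk z x) (q : T.Walk x y), (p.append q).IsPath := by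
  obtain ⟨r, hr, hx⟩ := h
  obtain ⟨p, q, -, -, rfl⟩ := hr.mem_support_iff_exists_append.1 hx
  exact ⟨p, q, hr⟩

theorem Ancestor.trans (hT : T.IsTree) (hxy : Ancestor T z x y) (hyw : Ancestor T z y w) :
    Ancestor T z x w := by
  obtain ⟨p, q, hpq⟩ := hyw.exists_append
  refine ⟨_, hpq, ?_⟩
  rw [support_append]
  exact List.mem_append_left _ (hxy.mem_support hT hpq.of_append_left)

theorem Ancestor.antisymm (hT : T.IsTree) (hxy : Ancestor T z x y) (hyx : Ancestor T z y x) :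
    x = y := by
  obtain ⟨p, q, hpq⟩ := hyx.exists_append
  by_contra hne
  exact hpq.ne_of_mem_support_of_append hne (hxy.mem_support hT hpq.of_append_left)
    q.end_mem_support rfl

theorem Ancestor.ancestor_or_mem_support (hT : T.IsTree) (hxy : Ancestor T z x y)
    (hvy : Ancestor T z v y) {p : T.Walk x y} (hp : p.IsPath) :
    Ancestor T z v x ∨ v ∈ p.support := by
  obtain ⟨q₀, q₁, hq⟩ := hxy.exists_append
  obtain rfl := hT.eq_of_isPath hq.of_append_right hp
  have hv := hvy.mem_support hT hq
  rw [support_append] at hv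
  rcases List.mem_append.1 hv with hv | hv
  · exact Or.inl ⟨q₀, hq.of_append_left, hv⟩
  · exact Or.inr (List.mem_of_mem_tail hv)

theorem Ancestor.of_mem_support (hT : T.IsTree) (hxy : Ancestor T z x y) {p : T.Walk x y}
    (hp : p.IsPath) (hv : v ∈ p.support) : Ancestor T z x v := by
  obtain ⟨q₀, q₁, hq⟩ := hxy.exists_append
  obtain rfl := hT.eq_of_isPath hq.of_append_right hp
  obtain ⟨p₀, p₁, -, -, rfl⟩ := hp.mem_support_iff_exists_append.1 hv
  rw [append_assoc] at hq
  exact ⟨q₀.append p₀, hq.of_append_left, by simp [support_append]⟩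

theorem Related.symm (h : Related T z x y) : Related T z y x := Or.symm h

theorem related_of_ancestor_of_ancestor (hT : T.IsTree) (hxw : Ancestor T z x w)
    (hyw : Ancestor T z y w) : Related T z x y := by
  obtain ⟨p, hp, -⟩ := hT.existsUnique_path x w
  rcases hxw.ancestor_or_mem_support hT hyw hp with hyx | hy
  · exact Or.inr hyx
  · exact Or.inl (hxw.of_mem_support hT hp hy)

theorem Related.of_ancestor (hT : T.IsTree) (hxy : Ancestor T z x y) (hwy : Related T z w y) :
    Related T z x w := by
  rcases hwy with hwy | hyw
  · exact related_of_ancestor_of_ancestor hT hxy hwy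
  · exact Or.inl (hxy.trans hT hyw)

theorem Ancestor.of_related_of_not_related (hT : T.IsTree) (hxy : Related T z x y)
    (hxw : Related T z x w) (hyw : ¬ Related T z y w) : Ancestor T z x y :=
  hxy.resolve_right fun hyx => hyw (Related.of_ancestor hT hyx hxw.symm)

theorem SimpleGraph.Adj.related (hT : T.IsTree) (h : T.Adj u v) : Related T z u v := by
  obtain ⟨p, hp, -⟩ := hT.existsUnique_path z u
  obtain ⟨q, hq, -⟩ := hT.existsUnique_path z v
  by_cases hu : u ∈ q.support
  · exact Or.inl ⟨q, hq, hu⟩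
  · exact Or.inr
      ⟨p, hp, hT.isAcyclic.mem_support_of_ne_mem_support_of_adj_of_isPath hp hq h hu⟩

theorem Ancestor.eq_or_ancestor_of_adj (hT : T.IsTree) (h : T.Adj w v)
    (hwv : Ancestor T z w v) (hxv : Ancestor T z x v) : x = v ∨ Ancestor T z x w := by
  obtain ⟨p, hp, -⟩ := hT.existsUnique_path z w
  obtain ⟨q, hq, hw⟩ := hwv
  obtain rfl := hT.isAcyclic.path_concat hp hq h hw
  have hx := hxv.mem_support hT hq
  rw [support_concat, List.mem_append, List.mem_singleton] at hx
  exact hx.symm.imp_right fun hx => ⟨p, hp, hx⟩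

theorem eq_of_adj_of_ancestor_of_adj_of_ancestor (hT : T.IsTree) (h₁ : T.Adj x v)
    (hx : Ancestor T z x v) (h₂ : T.Adj y v) (hy : Ancestor T z y v) : x = y := by
  have hxy := (Ancestor.eq_or_ancestor_of_adj hT h₂ hy hx).resolve_left h₁.ne
  have hyx := (Ancestor.eq_or_ancestor_of_adj hT h₁ hx hy).resolve_left h₂.ne
  exact hxy.antisymm hT hyx

theorem Ancestor.of_walk (hT : T.IsTree) (p : T.Walk u v) (hxu : Ancestor T z x u)
    (hx : x ∉ p.support) : Ancestor T z x v := by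
  induction p with
  | nil => exact hxu
  | cons h p ih =>
    rw [support_cons, List.mem_cons, not_or] at hx
    refine ih ?_ hx.2
    rcases h.related hT (z := z) with huv | hvu
    · exact hxu.trans hT huv
    · exact (Ancestor.eq_or_ancestor_of_adj hT h.symm hvu hxu).resolve_left hx.1

theorem Ancestor.of_forall_succ (hT : T.IsTree) {f : ℕ → V} {n : ℕ}
    (h : ∀ i < n, Ancestor T z (f i) (f (i + 1))) {i j : ℕ} (hij : i ≤ j) (hjn : j ≤ n) :
    Ancestor T z (f i) (f j) := by
  induction j, hij using Nat.le_induction with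
  | base => exact Ancestor.refl hT _
  | succ j _ ih => exact (ih (by omega)).trans hT (h j (by omega))

end RootedTree

namespace SimpleGraph.Walk.IsPath

variable {T : SimpleGraph V} {z u v w : V} {p : T.Walk u v}

theorem snd_eq_of_not_ancestor (hT : T.IsTree) (hp : p.IsPath) (h : T.Adj u w)
    (hw : Ancestor T z w u) (hu : ¬ Ancestor T z u v) : p.snd = w := by
  have hnil : ¬ p.Nil := not_nil_of_ne fun huv => hu (huv ▸ Ancestor.refl hT u)
  have hadj := p.adj_snd hnil
  rcases hadj.related hT (z := z) with hsnd | hsnd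
  · rw [← cons_tail_eq p hnil, cons_isPath_iff] at hp
    exact absurd (hsnd.of_walk hT p.tail hp.2) hu
  · exact eq_of_adj_of_ancestor_of_adj_of_ancestor hT hadj.symm hsnd h.symm hw

theorem snd_eq_of_ancestor (hT : T.IsTree) (hp : p.IsPath) (h : T.Adj u w)
    (huw : Ancestor T z u w) (hwv : Ancestor T z w v) : p.snd = w := by
  rcases Ancestor.ancestor_or_mem_support hT (huw.trans hT hwv) hwv hp with hwu | hw
  · exact absurd (huw.antisymm hT hwu) h.ne
  · exact (hT.isAcyclic.eq_snd_of_adj_start hp h hw).symm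

theorem penultimate_eq_of_not_ancestor (hT : T.IsTree) (hp : p.IsPath) (h : T.Adj w v)
    (hw : Ancestor T z w v) (hv : ¬ Ancestor T z v u) : p.penultimate = w := by
  rw [← snd_reverse]
  exact hp.reverse.snd_eq_of_not_ancestor hT h.symm hw hv

theorem penultimate_eq_of_ancestor (hT : T.IsTree) (hp : p.IsPath) (h : T.Adj w v)
    (hvw : Ancestor T z v w) (hwu : Ancestor T z w u) : p.penultimate = w := by
  rw [← snd_reverse]
  exact hp.reverse.snd_eq_of_ancestor hT h.symm hvw hwu

theorem ancestor_getVert_succ (hT : T.IsTree) (hp : p.IsPath) {i j : ℕ}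
    (hi : Ancestor T z (p.getVert i) (p.getVert (i + 1))) (hij : i ≤ j) (hj : j < p.length) :
    Ancestor T z (p.getVert j) (p.getVert (j + 1)) := by
  induction j, hij using Nat.le_induction with
  | base => exact hi
  | succ j _ ih =>
    have hadj := p.adj_getVert_succ hj
    refine (hadj.related hT).resolve_right fun hup => ?_
    -- otherwise `p.getVert (j + 1)` has the two parents `p.getVert j` and `p.getVert (j + 2)`
    have hpar := eq_of_adj_of_ancestor_of_adj_of_ancestor hT (p.adj_getVert_succ (by omega))
      (ih (by omega)) hadj.symm hup
    have := hp.getVert_injOn (by rw [Set.mem_ofPred_eq]; omega) (by rw [Set.mem_ofPred_eq]; omega)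
      hpar
    omega

end SimpleGraph.Walk.IsPath

section Requests

variable {T : SimpleGraph V} {z : V} {r r' : Request T}

namespace Request

theorem not_nil (r : Request T) : ¬ r.toWalk.Nil := by
  rw [← length_eq_zero_iff]
  exact Nat.one_le_iff_ne_zero.1 r.one_le_length

theorem adj_sPlus (r : Request T) : T.Adj r.s r.sPlus := r.toWalk.adj_snd r.not_nil

theorem adj_tMinus (r : Request T) : T.Adj r.tMinus r.t := r.toWalk.adj_penultimate r.not_nil

theorem getVert_length_sub_one_add_one (r : Request T) :
    r.toWalk.getVert (r.toWalk.length - 1 + 1) = r.t := by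
  rw [Nat.sub_add_cancel r.one_le_length, getVert_length]

end Request

theorem Converging.sPlus_ancestor (h : Converging T z r) : Ancestor T z r.sPlus r.s := by
  simpa [Request.sPlus] using h 0 r.one_le_length

theorem Converging.ancestor_tMinus (h : Converging T z r) : Ancestor T z r.t r.tMinus := by
  simpa [Request.tMinus, r.getVert_length_sub_one_add_one] using h (r.toWalk.length - 1) (by
    have := r.one_le_length; omega)

theorem Converging.tMinus_ancestor (hT : T.IsTree) (h : Converging T z r) :
    Ancestor T z r.tMinus r.s := by
  have hup (i : ℕ) (hi : i < r.toWalk.length) :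
      Ancestor T z (r.toWalk.getVert (r.toWalk.length - i))
        (r.toWalk.getVert (r.toWalk.length - (i + 1))) := by
    simpa [show r.toWalk.length - (i + 1) + 1 = r.toWalk.length - i by omega] using
      h (r.toWalk.length - (i + 1)) (by omega)
  simpa [Request.tMinus] using Ancestor.of_forall_succ hT hup r.one_le_length le_rfl

theorem Diverging.ancestor_sPlus (h : Diverging T z r) : Ancestor T z r.s r.sPlus := by
  simpa [Request.sPlus] using h 0 r.one_le_length

theorem Diverging.tMinus_ancestor (h : Diverging T z r) : Ancestor T z r.tMinus r.t := by
  simpa [Request.tMinus, r.getVert_length_sub_one_add_one] using h (r.toWalk.length - 1) (by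
    have := r.one_le_length; omega)

theorem Diverging.sPlus_ancestor (hT : T.IsTree) (h : Diverging T z r) :
    Ancestor T z r.sPlus r.t := by
  simpa [Request.sPlus] using Ancestor.of_forall_succ hT h r.one_le_length le_rfl

theorem Unimodal.sPlus_ancestor (hT : T.IsTree) (h : Unimodal T z r) :
    Ancestor T z r.sPlus r.s := by
  refine (r.adj_sPlus.related hT).resolve_left fun hdown => h.2 fun i hi => ?_
  exact r.isPath.ancestor_getVert_succ hT (i := 0) (by simpa [Request.sPlus] using hdown)
    (Nat.zero_le i) hi

theorem Unimodal.tMinus_ancestor (hT : T.IsTree) (h : Unimodal T z r) :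
    Ancestor T z r.tMinus r.t := by
  by_contra hup
  refine h.1 fun i hi => ((r.toWalk.adj_getVert_succ hi).related hT).resolve_left fun hdown => ?_
  have := r.isPath.ancestor_getVert_succ hT hdown (j := r.toWalk.length - 1) (by omega) (by omega)
  exact hup (by simpa [Request.tMinus, r.getVert_length_sub_one_add_one] using this)

theorem Unimodal.not_related (hT : T.IsTree) (h : Unimodal T z r) : ¬ Related T z r.s r.t := by
  rintro (hst | hts)
  · have hs := hst.of_mem_support hT r.isPath (r.toWalk.getVert_mem_support 1)
    exact r.adj_sPlus.ne (hs.antisymm hT (h.sPlus_ancestor hT))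
  · have ht := hts.of_mem_support hT r.isPath.reverse (v := r.tMinus)
      (by rw [support_reverse, List.mem_reverse]; exact r.toWalk.getVert_mem_support _)
    exact r.adj_tMinus.ne ((h.tMinus_ancestor hT).antisymm hT ht)

theorem interferesOn_of_isPath {p : T.Walk r.s r'.t} (hp : p.IsPath) (hne : r.s ≠ r'.t)
    (hs : p.snd = r.sPlus) (ht : p.penultimate = r'.tMinus) : InterferesOn T r r' :=
  ⟨p, hp, Nat.one_le_iff_ne_zero.2 fun h => hne (eq_of_length_eq_zero h), hs, ht⟩

theorem related_of_not_interferesOn (hT : T.IsTree) (hs : Ancestor T z r.sPlus r.s)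
    (ht : Ancestor T z r'.tMinus r'.t) (h : ¬ InterferesOn T r r') : Related T z r.s r'.t := by
  by_contra hst
  obtain ⟨p, hp, -⟩ := hT.existsUnique_path r.s r'.t
  refine h (interferesOn_of_isPath hp (fun he => hst (Or.inl (he ▸ Ancestor.refl hT _))) ?_ ?_)
  · exact hp.snd_eq_of_not_ancestor hT r.adj_sPlus hs fun h' => hst (Or.inl h')
  · exact hp.penultimate_eq_of_not_ancestor hT r'.adj_tMinus ht fun h' => hst (Or.inr h')

theorem interferesOn_of_tMinus_ancestor (hT : T.IsTree) (hs : Ancestor T z r.sPlus r.s)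
    (ht : Ancestor T z r'.t r'.tMinus) (h : Ancestor T z r'.tMinus r.s) :
    InterferesOn T r r' := by
  have hst : ¬ Ancestor T z r.s r'.t := fun hst =>
    r'.adj_tMinus.ne ((h.trans hT hst).antisymm hT ht)
  obtain ⟨p, hp, -⟩ := hT.existsUnique_path r.s r'.t
  refine interferesOn_of_isPath hp (fun he => hst (he ▸ Ancestor.refl hT _)) ?_ ?_
  · exact hp.snd_eq_of_not_ancestor hT r.adj_sPlus hs hst
  · exact hp.penultimate_eq_of_ancestor hT r'.adj_tMinus ht h

theorem interferesOn_of_sPlus_ancestor (hT : T.IsTree) (hs : Ancestor T z r.s r.sPlus)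
    (ht : Ancestor T z r'.tMinus r'.t) (h : Ancestor T z r.sPlus r'.t) :
    InterferesOn T r r' := by
  have hts : ¬ Ancestor T z r'.t r.s := fun hts =>
    r.adj_sPlus.ne (hs.antisymm hT (h.trans hT hts))
  obtain ⟨p, hp, -⟩ := hT.existsUnique_path r.s r'.t
  refine interferesOn_of_isPath hp (fun he => hts (he ▸ Ancestor.refl hT _)) ?_ ?_
  · exact hp.snd_eq_of_ancestor hT r.adj_sPlus hs h
  · exact hp.penultimate_eq_of_not_ancestor hT r'.adj_tMinus ht hts

end Requests

/-- Lemma 5: given a converging, a diverging and a unimodal request,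
two of them interfere. -/
theorem two_of_three_interfere {V : Type*} (T : SimpleGraph V) (hT : T.IsTree)
    (z : V) (rm rp rv : Request T)
    (hm : Converging T z rm) (hp : Diverging T z rp) (hv : Unimodal T z rv) :
    Interfere T rm rp ∨ Interfere T rm rv ∨ Interfere T rp rv := by
  by_contra h
  simp only [Interfere, not_or] at h
  obtain ⟨⟨hmp, -⟩, ⟨hmv, hvm⟩, hpv, hvp⟩ := h
  have hrel_sm_tp := related_of_not_interferesOn hT hm.sPlus_ancestor hp.tMinus_ancestor hmp
  have hrel_sm_tv := related_of_not_interferesOn hT hm.sPlus_ancestor (hv.tMinus_ancestor hT) hmv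
  have hrel_sv_tp := related_of_not_interferesOn hT (hv.sPlus_ancestor hT) hp.tMinus_ancestor hvp
  have htm_not_above_sv : ¬ Ancestor T z rm.tMinus rv.s := fun h =>
    hvm (interferesOn_of_tMinus_ancestor hT (hv.sPlus_ancestor hT) hm.ancestor_tMinus h)
  have hsp_not_above_tv : ¬ Ancestor T z rp.sPlus rv.t := fun h =>
    hpv (interferesOn_of_sPlus_ancestor hT hp.ancestor_sPlus (hv.tMinus_ancestor hT) h)
  have hsv_tv := hv.not_related hT
  have htp_tv : ¬ Related T z rp.t rv.t := fun h =>
    hsp_not_above_tv <| (hp.sPlus_ancestor hT).trans hT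
      (Ancestor.of_related_of_not_related hT h hrel_sv_tp.symm fun h' => hsv_tv h'.symm)
  have hsm_tp := Ancestor.of_related_of_not_related hT hrel_sm_tp hrel_sm_tv htp_tv
  have hsm_tv := Ancestor.of_related_of_not_related hT hrel_sm_tv hrel_sm_tp fun h => htp_tv h.symm
  rcases Related.of_ancestor hT ((hm.tMinus_ancestor hT).trans hT hsm_tp) hrel_sv_tp with h | h
  · exact htm_not_above_sv h
  · exact hsv_tv (Or.inl (h.trans hT ((hm.tMinus_ancestor hT).trans hT hsm_tv)))
end
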